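/- For a connected graph Σ with at least one edge, the diameter of the subdivision graph S(Σ) satisfies 2·diam(Σ) ≤ diam(S(Σ)) ≤ 2·diam(Σ) + 2. -/

import Mathlib

open SimpleGraph Sum

variable {V : Type*}

/-- The subdivision graph of a simple graph: vertices are original vertices plus edges,
with adjacency given by incidence. -/
def SimpleGraph.subdivision (G : SimpleGraph V) : SimpleGraph (V ⊕ G.edgeSet) where
  Adj a b :=
    match a, b with
    | Sum.inl x, Sum.inr e => x ∈ (e : Sym2 V)
    | Sum.inr e, Sum.inl x => x ∈ (e : Sym2 V)
    | _, _ => False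
  symm := ⟨by
    rintro (x | e) (y | f) h <;> simp_all⟩
  loopless := ⟨by
    rintro (x | e) h <;> simp_all⟩

/-!
Doubling a walk of `G` (each edge `xz` becomes `x — s(x, z) — z`) gives a walk of `S(G)`, and
conversely a walk of `S(G)` between original vertices alternates vertex, edge, vertex, so halving
it gives a walk of `G`. Hence `d_S(x, y) = 2 d_G(x, y)` for original vertices, which gives the lower
bound; the upper bound follows since every vertex of `S(G)` is within distance 1 of an original one.
-/

namespace SimpleGraph

variable {G : SimpleGraph V}

lemma subdivision_adj_inl_inr {x : V} {e : G.edgeSet} :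
    G.subdivision.Adj (inl x) (inr e) ↔ x ∈ (e : Sym2 V) := Iff.rfl

lemma subdivision_adj_inr_inl {x : V} {e : G.edgeSet} :
    G.subdivision.Adj (inr e) (inl x) ↔ x ∈ (e : Sym2 V) := Iff.rfl

def Walk.toSubdivision : ∀ {x y : V}, G.Walk x y → G.subdivision.Walk (inl x) (inl y)
  | _, _, .nil => .nil
  | x, _, .cons (v := z) h p =>
    .cons (v := inr ⟨s(x, z), h⟩) (subdivision_adj_inl_inr.mpr (Sym2.mem_mk_left x z))
      (.cons (subdivision_adj_inr_inl.mpr (Sym2.mem_mk_right x z)) p.toSubdivision)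

@[simp]
lemma Walk.length_toSubdivision {x y : V} (p : G.Walk x y) :
    p.toSubdivision.length = 2 * p.length := by
  induction p with
  | nil => rfl
  | cons h p ih => simp only [toSubdivision, length_cons, ih]; ring

lemma Walk.exists_two_mul_length_le_of_subdivision :
    ∀ {x y : V} (p : G.subdivision.Walk (inl x) (inl y)),
      ∃ q : G.Walk x y, 2 * q.length ≤ p.length
  | _, _, .nil => ⟨.nil, by simp⟩
  | x, _, .cons (v := inr e) hx (.cons (v := inl z) hz p) => by
    obtain ⟨q, hq⟩ := exists_two_mul_length_le_of_subdivision p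
    by_cases hxz : x = z
    · subst hxz
      exact ⟨q, by simp only [length_cons]; omega⟩
    · have hadj : G.Adj x z := adj_iff_exists_edge.mpr ⟨hxz, e, e.2, hx, hz⟩
      exact ⟨.cons hadj q, by simp only [length_cons]; omega⟩

lemma edist_subdivision_inl (x y : V) :
    G.subdivision.edist (inl x) (inl y) = 2 * G.edist x y := by
  apply le_antisymm
  · by_cases hxy : G.Reachable x y
    · obtain ⟨p, hp⟩ := hxy.exists_walk_length_eq_edist
      calc G.subdivision.edist (inl x) (inl y) ≤ p.toSubdivision.length := edist_le _
        _ = 2 * G.edist x y := by simp [← hp]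
    · simp [edist_eq_top_of_not_reachable hxy]
  · by_cases hS : G.subdivision.edist (inl x) (inl y) = ⊤
    · simp [hS]
    obtain ⟨p, hp⟩ := exists_walk_of_edist_ne_top hS
    obtain ⟨q, hq⟩ := p.exists_two_mul_length_le_of_subdivision
    calc 2 * G.edist x y ≤ 2 * q.length := by gcongr; exact edist_le q
      _ ≤ p.length := mod_cast hq
      _ = _ := hp

lemma exists_edist_subdivision_inl_le_one (a : V ⊕ G.edgeSet) :
    ∃ x, G.subdivision.edist a (inl x) ≤ 1 := by
  rcases a with x | e
  · exact ⟨x, by simp⟩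
  · refine ⟨(e : Sym2 V).out.1, edist_le_one_iff_adj_or_eq.mpr (.inl ?_)⟩
    exact subdivision_adj_inr_inl.mpr (Sym2.out_fst_mem _)

lemma two_mul_ediam_le_ediam_subdivision : 2 * G.ediam ≤ G.subdivision.ediam := by
  simp only [ediam_eq_iSup_iSup_edist, ENat.mul_iSup]
  exact iSup₂_le fun x y => (edist_subdivision_inl x y).symm.trans_le edist_le_ediam

lemma ediam_subdivision_le : G.subdivision.ediam ≤ 2 * G.ediam + 2 := by
  refine ediam_le_of_edist_le fun a b => ?_
  obtain ⟨x, hx⟩ := exists_edist_subdivision_inl_le_one a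
  obtain ⟨y, hy⟩ := exists_edist_subdivision_inl_le_one b
  calc G.subdivision.edist a b
      ≤ G.subdivision.edist a (inl x) + G.subdivision.edist (inl x) (inl y)
        + G.subdivision.edist (inl y) b :=
        G.subdivision.edist_triangle.trans (add_le_add_left G.subdivision.edist_triangle _)
    _ ≤ 1 + 2 * G.ediam + 1 := by
        gcongr
        · rw [edist_subdivision_inl]; gcongr; exact edist_le_ediam
        · rwa [edist_comm]
    _ = 2 * G.ediam + 2 := by ring

end SimpleGraph

theorem subdivision_diam_bounds_general (G : SimpleGraph V) :
    2 * G.diam ≤ G.subdivision.diam ∧ G.subdivision.diam ≤ 2 * G.diam + 2 := by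
  have hlower := G.two_mul_ediam_le_ediam_subdivision
  have hupper := G.ediam_subdivision_le
  cases hG : G.ediam with
  | top =>
    -- both extended diameters are infinite, so both `diam`s take the junk value 0
    rw [hG, ENat.mul_top two_ne_zero, top_le_iff] at hlower
    simp [diam_eq_zero_of_ediam_eq_top hG, diam_eq_zero_of_ediam_eq_top hlower]
  | coe n =>
    rw [hG] at hlower hupper
    have hlower' : ((2 * n : ℕ) : ℕ∞) ≤ G.subdivision.ediam := mod_cast hlower
    have hupper' : G.subdivision.ediam ≤ ((2 * n + 2 : ℕ) : ℕ∞) := mod_cast hupper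
    have hfinite := ne_top_of_le_ne_top (ENat.natCast_ne_top _) hupper'
    exact ⟨by simpa [diam, hG] using ENat.toNat_le_toNat hlower' hfinite,
      by simpa [diam, hG] using ENat.toNat_le_of_le_natCast hupper'⟩

theorem subdivision_diam_bounds [Fintype V] (G : SimpleGraph V) (hconn : G.Connected)
    (hne : G.edgeSet.Nonempty) (hd : 1 ≤ G.diam) :
    2 * G.diam ≤ G.subdivision.diam ∧ G.subdivision.diam ≤ 2 * G.diam + 2 :=
  subdivision_diam_bounds_general G
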